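/- arXiv:1001.2385 — 6 statements merged into one kernel-verified Lean document; each statement's English description precedes it below -/
import Mathlib

section
/- Along any solution of the planar system with γ ≠ 1 that stays in the half-plane x > 0, the function φ(x,y) = -(2b/3)·x^{3(1-γ)} + x^{2-3γ} + y²/x^{3γ} is a first integral. Precisely: let γ, b be real numbers with b > 0 and γ ≠ 1, and let x, y : ℝ → ℝ be differentiable functions satisfying x'(t) = -x(t)·y(t) and y'(t) = b(γ-1)·x(t)³ - ((3γ-2)/2)·x(t)² - (3γ/2)·y(t)² for all t, with x(t) > 0 for all t. Then the function t ↦ -(2b/3)·x(t)^{3(1-γ)} + x(t)^{2-3γ} + y(t)²/x(t)^{3γ} is constant on ℝ. -/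
/-!
With `E = energy b x y = -(2b/3)x³ + x² + y²` one has `φ = x^(-3γ) · E`. Along a
solution `Ė = -3γ y E`, while `ẋ = -x y` gives `d/dt x^(-3γ) = 3γ y x^(-3γ)`;
so `x^(-3γ)` is an integrating factor and the product has derivative zero.
-/

open Real

noncomputable def energy (b x y : ℝ) : ℝ := -(2 * b / 3) * x ^ 3 + x ^ 2 + y ^ 2

theorem HasDerivAt.rpow_const_of_hasDerivAt_mul {f : ℝ → ℝ} {g t : ℝ}
    (hf : HasDerivAt f (f t * g) t) (hft : 0 < f t) (r : ℝ) :
    HasDerivAt (fun s => f s ^ r) (r * g * f t ^ r) t := by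
  convert hf.rpow_const (p := r) (Or.inl hft.ne') using 1
  rw [rpow_sub_one hft.ne']
  field_simp

theorem rpow_mul_energy_eq {x : ℝ} (hx : 0 < x) (γ b y : ℝ) :
    x ^ (-(3 * γ)) * energy b x y
      = -(2 * b / 3) * x ^ (3 * (1 - γ)) + x ^ (2 - 3 * γ) + y ^ 2 / x ^ (3 * γ) := by
  have h3 : x ^ (3 * (1 - γ)) = x ^ (-(3 * γ)) * x ^ 3 := by
    rw [← rpow_natCast, ← rpow_add hx]; push_cast; ring_nf
  have h2 : x ^ (2 - 3 * γ) = x ^ (-(3 * γ)) * x ^ 2 := by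
    rw [← rpow_natCast, ← rpow_add hx]; push_cast; ring_nf
  rw [energy, h3, h2, rpow_neg hx.le]
  ring

theorem hasDerivAt_energy {x y : ℝ → ℝ} {γ b t : ℝ}
    (hx : HasDerivAt x (-(x t * y t)) t)
    (hy : HasDerivAt y
      (b * (γ - 1) * x t ^ 3 - (3 * γ - 2) / 2 * x t ^ 2 - 3 * γ / 2 * y t ^ 2) t) :
    HasDerivAt (fun s => energy b (x s) (y s)) (-(3 * γ) * y t * energy b (x t) (y t)) t := by
  unfold energy
  refine ((((hx.fun_pow 3).const_mul _).fun_add (hx.fun_pow 2)).fun_add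
    (hy.fun_pow 2)).congr_deriv ?_
  norm_num
  ring

theorem first_integral_gamma_ne_one_general
    (γ b : ℝ)
    (x y : ℝ → ℝ)
    (hx : ∀ t, HasDerivAt x (-(x t * y t)) t)
    (hy : ∀ t, HasDerivAt y
      (b * (γ - 1) * x t ^ 3 - (3 * γ - 2) / 2 * x t ^ 2 - 3 * γ / 2 * y t ^ 2) t)
    (hxpos : ∀ t, 0 < x t) :
    ∀ s t : ℝ,
      -(2 * b / 3) * x s ^ (3 * (1 - γ)) + x s ^ (2 - 3 * γ) + y s ^ 2 / x s ^ (3 * γ)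
        = -(2 * b / 3) * x t ^ (3 * (1 - γ)) + x t ^ (2 - 3 * γ) + y t ^ 2 / x t ^ (3 * γ) := by
  have hconst : ∀ t, HasDerivAt (fun s => x s ^ (-(3 * γ)) * energy b (x s) (y s)) 0 t := by
    intro t
    have hfactor := ((hx t).congr_deriv (neg_mul_eq_mul_neg _ _)).rpow_const_of_hasDerivAt_mul
      (hxpos t) (-(3 * γ))
    exact (hfactor.fun_mul (hasDerivAt_energy (hx t) (hy t))).congr_deriv (by ring)
  intro s t
  rw [← rpow_mul_energy_eq (hxpos s), ← rpow_mul_energy_eq (hxpos t)]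
  exact is_const_of_deriv_eq_zero (fun t => (hconst t).differentiableAt)
    (fun t => (hconst t).deriv) s t

/-- Along any solution of the planar system `ẋ = -x y`,
`ẏ = b(γ-1)x³ - ((3γ-2)/2)x² - (3γ/2)y²` with `γ ≠ 1` staying in the half-plane
`x > 0`, the function `φ(x,y) = -(2b/3)x^(3(1-γ)) + x^(2-3γ) + y²/x^(3γ)` is a
first integral. -/
theorem first_integral_gamma_ne_one
    (γ b : ℝ) (hb : 0 < b) (hγ : γ ≠ 1)
    (x y : ℝ → ℝ)
    (hx : ∀ t, HasDerivAt x (-(x t * y t)) t)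
    (hy : ∀ t, HasDerivAt y
      (b * (γ - 1) * x t ^ 3 - (3 * γ - 2) / 2 * x t ^ 2 - 3 * γ / 2 * y t ^ 2) t)
    (hxpos : ∀ t, 0 < x t) :
    ∀ s t : ℝ,
      -(2 * b / 3) * x s ^ (3 * (1 - γ)) + x s ^ (2 - 3 * γ) + y s ^ 2 / x s ^ (3 * γ)
        = -(2 * b / 3) * x t ^ (3 * (1 - γ)) + x t ^ (2 - 3 * γ) + y t ^ 2 / x t ^ (3 * γ) :=
  first_integral_gamma_ne_one_general γ b x y hx hy hxpos
end

section
/- Along any solution of the planar system with γ = 1 that stays in the half-plane x > 0, the function φ(x,y) = 1/x + y²/x³ is a first integral. Precisely: let b > 0 and let x, y : ℝ → ℝ be differentiable functions satisfying x'(t) = -x(t)·y(t) and y'(t) = b·0·x(t)³ - (1/2)·x(t)² - (3/2)·y(t)² (i.e. y'(t) = -(1/2)·x(t)² - (3/2)·y(t)²) for all t, with x(t) > 0 for all t. Then the function t ↦ 1/x(t) + y(t)²/x(t)³ is constant on ℝ. -/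
theorem HasDerivAt.one_div_add_sq_div_pow_three {x y : ℝ → ℝ} {x' y' t : ℝ}
    (hx : HasDerivAt x x' t) (hy : HasDerivAt y y' t) (hxt : x t ≠ 0) :
    HasDerivAt (fun s => 1 / x s + y s ^ 2 / x s ^ 3)
      (-x' / x t ^ 2 + (2 * y t * y' * x t - 3 * y t ^ 2 * x') / x t ^ 4) t := by
  have hinv := (hasDerivAt_const t (1 : ℝ)).fun_div hx hxt
  have hquot := (hy.fun_pow 2).fun_div (hx.fun_pow 3) (pow_ne_zero 3 hxt)
  refine (hinv.add hquot).congr_deriv ?_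
  field_simp
  ring

/-- With `x' = -x y` and `y' = -x²/2 - 3y²/2` the terms `y/x` and `3y³/x³` cancel in pairs. -/
theorem hasDerivAt_one_div_add_sq_div_pow_three_eq_zero {x y : ℝ → ℝ} {t : ℝ}
    (hx : HasDerivAt x (-(x t * y t)) t)
    (hy : HasDerivAt y (-(1 / 2) * x t ^ 2 - 3 / 2 * y t ^ 2) t) (hxt : x t ≠ 0) :
    HasDerivAt (fun s => 1 / x s + y s ^ 2 / x s ^ 3) 0 t := by
  convert hx.one_div_add_sq_div_pow_three hy hxt using 1
  field_simp
  ring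

theorem first_integral_gamma_eq_one_general
    (b : ℝ)
    (x y : ℝ → ℝ)
    (hx : ∀ t, HasDerivAt x (-(x t * y t)) t)
    (hy : ∀ t, HasDerivAt y
      (b * 0 * x t ^ 3 - 1 / 2 * x t ^ 2 - 3 / 2 * y t ^ 2) t)
    (hxpos : ∀ t, 0 < x t) :
    ∀ s t : ℝ,
      1 / x s + y s ^ 2 / x s ^ 3 = 1 / x t + y t ^ 2 / x t ^ 3 := by
  have hφ : ∀ t, HasDerivAt (fun s => 1 / x s + y s ^ 2 / x s ^ 3) 0 t := fun t =>
    hasDerivAt_one_div_add_sq_div_pow_three_eq_zero (hx t)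
      ((hy t).congr_deriv (by ring)) (hxpos t).ne'
  exact is_const_of_deriv_eq_zero (fun t => (hφ t).differentiableAt) (fun t => (hφ t).deriv)

/-- Along any solution of the planar system with `γ = 1`, i.e.
`ẋ = -x y`, `ẏ = b·0·x³ - (1/2)x² - (3/2)y²`, staying in the half-plane `x > 0`,
the function `φ(x,y) = 1/x + y²/x³` is a first integral. -/
theorem first_integral_gamma_eq_one
    (b : ℝ) (hb : 0 < b)
    (x y : ℝ → ℝ)
    (hx : ∀ t, HasDerivAt x (-(x t * y t)) t)
    (hy : ∀ t, HasDerivAt y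
      (b * 0 * x t ^ 3 - 1 / 2 * x t ^ 2 - 3 / 2 * y t ^ 2) t)
    (hxpos : ∀ t, 0 < x t) :
    ∀ s t : ℝ,
      1 / x s + y s ^ 2 / x s ^ 3 = 1 / x t + y t ^ 2 / x t ^ 3 :=
  first_integral_gamma_eq_one_general b x y hx hy hxpos
end

section
/- (Theorem 2(i)) For every γ ∈ (2/3, 2] and every b > 0, there is no solution of the planar system that asymptotically approaches the origin from the physical half-plane. Precisely: there exist no differentiable functions x, y : ℝ → ℝ satisfying x'(t) = -x(t)·y(t) and y'(t) = b(γ-1)·x(t)³ - ((3γ-2)/2)·x(t)² - (3γ/2)·y(t)² for all t, with x(t) > 0 for all t, such that (x(t), y(t)) → (0, 0) as t → +∞. -/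
/-!
Write `k = (3γ - 2)/2 > 0` and `a = b(γ - 1)`, so that `ẏ = a x³ - k x² - (k + 1) y²`.
Once `x` is small enough that `a x ≤ k/2`, the field gives `ẏ ≤ 0`, so `y` decreases to its
limit `0` and is therefore nonnegative. On the same time interval the Lyapunov function
`log x - y/(k x)` has derivative `(x² - x y + y²)/x - a x²/k ≥ 3x/4 - x/2 ≥ 0`, so it is
bounded below; since `y ≥ 0` it is at most `log x`, hence `x` stays away from `0`.
-/

open Filter Set Topology Real

theorem AntitoneOn.le_of_tendsto_atTop {α β : Type*} [SemilatticeSup α] [TopologicalSpace β]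
    [Preorder β] [OrderClosedTopology β] {f : α → β} {l : β} {T : α}
    (hf : AntitoneOn f (Ici T)) (hlim : Tendsto f atTop (𝓝 l)) {t : α} (ht : T ≤ t) :
    l ≤ f t :=
  have : Nonempty α := ⟨T⟩
  le_of_tendsto hlim <| eventually_atTop.2
    ⟨t, fun _ hs => hf (mem_Ici.2 ht) (mem_Ici.2 (ht.trans hs)) hs⟩

section PlanarSystem

variable {a k : ℝ}

lemma field_nonpos_of_mul_le (hk : 0 ≤ k) {x y : ℝ} (hax : a * x ≤ k) :
    a * x ^ 3 - k * x ^ 2 - (k + 1) * y ^ 2 ≤ 0 := by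
  nlinarith [mul_le_mul_of_nonneg_right hax (sq_nonneg x), sq_nonneg y]

noncomputable def lyapunov (k : ℝ) (x y : ℝ → ℝ) (t : ℝ) : ℝ :=
  log (x t) - y t / (k * x t)

lemma hasDerivAt_lyapunov (hk : k ≠ 0) {x y : ℝ → ℝ} {t : ℝ}
    (hx : HasDerivAt x (-(x t * y t)) t)
    (hy : HasDerivAt y (a * x t ^ 3 - k * x t ^ 2 - (k + 1) * y t ^ 2) t) (hpos : 0 < x t) :
    HasDerivAt (lyapunov k x y) ((x t ^ 2 - x t * y t + y t ^ 2) / x t - a / k * x t ^ 2) t := by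
  refine ((hx.log hpos.ne').sub (hy.div (hx.const_mul k) (by positivity))).congr_deriv ?_
  field_simp
  ring

lemma lyapunov_deriv_nonneg (hk : 0 < k) {x y : ℝ} (hx : 0 < x) (hax : a * x ≤ k / 2) :
    0 ≤ (x ^ 2 - x * y + y ^ 2) / x - a / k * x ^ 2 := by
  have hquad : 3 / 4 * x ≤ (x ^ 2 - x * y + y ^ 2) / x := by
    rw [le_div_iff₀ hx]
    nlinarith [sq_nonneg (x - 2 * y)]
  have hcubic : a / k * x ^ 2 ≤ x / 2 := by
    rw [div_mul_eq_mul_div, div_le_iff₀ hk]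
    nlinarith [mul_le_mul_of_nonneg_right hax hx.le]
  linarith

theorem not_tendsto_origin_of_hasDerivAt (hk : 0 < k) {x y : ℝ → ℝ}
    (hx : ∀ t, HasDerivAt x (-(x t * y t)) t)
    (hy : ∀ t, HasDerivAt y (a * x t ^ 3 - k * x t ^ 2 - (k + 1) * y t ^ 2) t)
    (hpos : ∀ t, 0 < x t) :
    ¬ Tendsto (fun t => (x t, y t)) atTop (𝓝 (0, 0)) := by
  intro hlim
  obtain ⟨hxlim, hylim⟩ := (Prod.tendsto_iff _ _).1 hlim
  obtain ⟨T, hsmall⟩ : ∃ T, ∀ t ≥ T, a * x t ≤ k / 2 := eventually_atTop.1 <|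
    (by simpa using hxlim.const_mul a : Tendsto (a * x ·) atTop (𝓝 0)).eventually
      (eventually_le_nhds (by positivity))
  have hsmall' : ∀ t ∈ interior (Ici T), a * x t ≤ k / 2 := by
    rw [interior_Ici]
    exact fun t ht => hsmall t (le_of_lt ht)
  have hy_anti : AntitoneOn y (Ici T) :=
    antitoneOn_of_hasDerivWithinAt_nonpos (convex_Ici T)
      (fun t _ => (hy t).continuousAt.continuousWithinAt)
      (fun t _ => (hy t).hasDerivWithinAt)
      (fun t ht => field_nonpos_of_mul_le hk.le ((hsmall' t ht).trans (by linarith)))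
  have hL := fun t => hasDerivAt_lyapunov hk.ne' (hx t) (hy t) (hpos t)
  have hL_mono : MonotoneOn (lyapunov k x y) (Ici T) :=
    monotoneOn_of_hasDerivWithinAt_nonneg (convex_Ici T)
      (fun t _ => (hL t).continuousAt.continuousWithinAt) (fun t _ => (hL t).hasDerivWithinAt)
      (fun t ht => lyapunov_deriv_nonneg hk (hpos t) (hsmall' t ht))
  have hx_lower : ∀ t ≥ T, exp (lyapunov k x y T) ≤ x t := by
    intro t ht
    have hy_nonneg : 0 ≤ y t / (k * x t) :=
      div_nonneg (hy_anti.le_of_tendsto_atTop hylim ht) (mul_pos hk (hpos t)).le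
    calc exp (lyapunov k x y T) ≤ exp (lyapunov k x y t) :=
          exp_le_exp.2 (hL_mono (mem_Ici.2 le_rfl) (mem_Ici.2 ht) ht)
      _ ≤ exp (log (x t)) := exp_le_exp.2 (by unfold lyapunov; linarith)
      _ = x t := exp_log (hpos t)
  exact (exp_pos _).not_ge (ge_of_tendsto hxlim (eventually_atTop.2 ⟨T, hx_lower⟩))

end PlanarSystem

theorem no_solution_approaching_origin_general
    (γ b : ℝ) (hγ : γ ∈ Set.Ioc (2 / 3 : ℝ) 2) :
    ¬ ∃ x y : ℝ → ℝ,
      (∀ t, HasDerivAt x (-(x t * y t)) t) ∧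
      (∀ t, HasDerivAt y
        (b * (γ - 1) * x t ^ 3 - (3 * γ - 2) / 2 * x t ^ 2 - 3 * γ / 2 * y t ^ 2) t) ∧
      (∀ t, 0 < x t) ∧
      Filter.Tendsto (fun t => (x t, y t)) Filter.atTop (nhds ((0 : ℝ), (0 : ℝ))) := by
  rintro ⟨x, y, hx, hy, hpos, hlim⟩
  have hk : 0 < (3 * γ - 2) / 2 := by linarith [hγ.1]
  exact not_tendsto_origin_of_hasDerivAt (a := b * (γ - 1)) hk hx
    (fun t => (hy t).congr_deriv (by ring)) hpos hlim

/-- Theorem 2(i): for every `γ ∈ (2/3, 2]` and every `b > 0`, no solution of the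
planar system staying in the half-plane `x > 0` asymptotically approaches the
origin as `t → +∞`. -/
theorem no_solution_approaching_origin
    (γ b : ℝ) (hγ : γ ∈ Set.Ioc (2 / 3 : ℝ) 2) (hb : 0 < b) :
    ¬ ∃ x y : ℝ → ℝ,
      (∀ t, HasDerivAt x (-(x t * y t)) t) ∧
      (∀ t, HasDerivAt y
        (b * (γ - 1) * x t ^ 3 - (3 * γ - 2) / 2 * x t ^ 2 - 3 * γ / 2 * y t ^ 2) t) ∧
      (∀ t, 0 < x t) ∧
      Filter.Tendsto (fun t => (x t, y t)) Filter.atTop (nhds ((0 : ℝ), (0 : ℝ))) :=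
  no_solution_approaching_origin_general γ b hγ
end

section
/- (Theorem 2(iii), existence) For every γ ∈ (1, 2] and every b > 0, the planar system possesses a nonconstant periodic solution in the half-plane x > 0: there exist differentiable functions x, y : ℝ → ℝ satisfying x'(t) = -x(t)·y(t) and y'(t) = b(γ-1)·x(t)³ - ((3γ-2)/2)·x(t)² - (3γ/2)·y(t)² for all t, with x(t) > 0 for all t, such that (x, y) is nonconstant and there exists T > 0 with x(t+T) = x(t) and y(t+T) = y(t) for all t. -/
/-!
Write `x = exp s`. Along solutions `exp (-3γ s) * y ^ 2 + potential γ b s` is conserved, where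
`potential γ b s = exp (-(3γ - 2) s) * (1 - 2b/3 * exp s)` decreases and then increases, with a
negative minimum, and tends to `0` at `+∞`. For a level `E` between the minimum and `0` the level
curve `exp (-3γ s) * y ^ 2 = E - potential γ b s` is therefore a closed curve over an interval
`[s₁, s₂]` whose endpoints are simple zeros of `E - potential γ b`. Dividing out these zeros,
`E - potential γ b (μ - ρ u) = (1 - u ^ 2) * K u` with `K > 0` on `[-1, 1]`, so the curve is
parametrized smoothly by an angle through `s = μ - ρ cos σ`,
`y = -sin σ * √(exp (3γ s) * K (cos σ))`.
In the angle the system moves along this parametrization with a positive periodic speed, and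
solving `dσ/dt = speed σ` turns the parametrization into a periodic solution.
-/

open Real Set Filter Topology Function

section Dslope

variable {𝕜 E : Type*} [NontriviallyNormedField 𝕜] [NormedAddCommGroup E] [NormedSpace 𝕜 E]
  {f : 𝕜 → E} {a b : 𝕜}

theorem AnalyticAt.dslope (hf : AnalyticAt 𝕜 f b) : AnalyticAt 𝕜 (dslope f a) b := by
  rcases eq_or_ne b a with rfl | hba
  · obtain ⟨p, hp⟩ := hf
    exact hp.has_fpower_series_dslope_fslope.analyticAt
  · refine AnalyticAt.congr ?_ (dslope_eventuallyEq_slope_of_ne f hba).symm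
    rw [slope_fun_def]
    simp only [vsub_eq_sub]
    fun_prop (disch := exact sub_ne_zero.mpr hba)

theorem AnalyticOnNhd.exists_eq_sub_smul_sub_smul (hf : AnalyticOnNhd 𝕜 f univ)
    (ha : f a = 0) (hb : f b = 0) (hab : a ≠ b) :
    ∃ h : 𝕜 → E, AnalyticOnNhd 𝕜 h univ ∧ ∀ u, f u = (u - a) • (u - b) • h u := by
  have hb' : dslope f a b = 0 := by
    rw [dslope_of_ne f hab.symm, slope_def_module, ha, hb, sub_zero, smul_zero]
  refine ⟨dslope (dslope f a) b, fun u _ => (hf u trivial).dslope.dslope, fun u => ?_⟩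
  rw [sub_smul_dslope_of_zero hb', sub_smul_dslope_of_zero ha]

end Dslope

theorem exists_pos_eq_one_sub_sq_mul {G : ℝ → ℝ} (hG : AnalyticOnNhd ℝ G univ)
    (h₁ : G 1 = 0) (h₂ : G (-1) = 0) (hpos : ∀ u ∈ Ioo (-1 : ℝ) 1, 0 < G u)
    (hd₁ : deriv G 1 < 0) (hd₂ : 0 < deriv G (-1)) :
    ∃ K : ℝ → ℝ, Differentiable ℝ K ∧ (∀ u ∈ Icc (-1 : ℝ) 1, 0 < K u) ∧
      ∀ u, G u = (1 - u ^ 2) * K u := by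
  obtain ⟨h, hh, hfac⟩ := hG.exists_eq_sub_smul_sub_smul h₁ h₂ (by norm_num)
  have hK : Differentiable ℝ fun u => -h u := (differentiableOn_univ.mp hh.differentiableOn).neg
  have hGK : ∀ u, G u = (1 - u ^ 2) * -h u := fun u => by
    rw [hfac u, smul_eq_mul, smul_eq_mul]; ring
  have hderiv : ∀ c, deriv G c = -(2 * c) * -h c + (1 - c ^ 2) * deriv (fun u => -h u) c :=
    fun c => by
      rw [funext hGK]
      exact (((hasDerivAt_pow 2 c).const_sub 1).mul (hK c).hasDerivAt).deriv.trans (by ring)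
  refine ⟨fun u => -h u, hK, fun u hu => ?_, hGK⟩
  rcases hu.1.eq_or_lt with rfl | hu₁
  · have := hderiv (-1); norm_num at this; linarith
  rcases hu.2.eq_or_lt with rfl | hu₂
  · have := hderiv 1; norm_num at this; linarith
  exact pos_of_mul_pos_right (hGK u ▸ hpos u ⟨hu₁, hu₂⟩) (by nlinarith)

theorem exists_hasDerivAt_comp_of_periodic {p : ℝ → ℝ} {L : ℝ} (hp : Continuous p)
    (hpos : ∀ σ, 0 < p σ) (hper : Periodic p L) (hL : 0 < L) :
    ∃ φ : ℝ → ℝ, ∃ T > 0, (∀ t, HasDerivAt φ (p (φ t)) t) ∧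
      (∀ t, φ (t + T) = φ t + L) ∧ Surjective φ := by
  set τ : ℝ → ℝ := fun u => ∫ σ in 0..u, (p σ)⁻¹
  have hq : Continuous fun σ => (p σ)⁻¹ := hp.inv₀ fun σ => (hpos σ).ne'
  have hqpos : ∀ σ, 0 < (p σ)⁻¹ := fun σ => inv_pos.mpr (hpos σ)
  have hqper : Periodic (fun σ => (p σ)⁻¹) L := fun σ => by simp only [hper σ]
  have hτ : ∀ u, HasDerivAt τ (p u)⁻¹ u := fun u =>
    (hq.integral_hasStrictDerivAt 0 u).hasDerivAt
  have hτmono : StrictMono τ := strictMono_of_hasDerivAt_pos hτ hqpos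
  have hτsurj : Surjective τ :=
    (continuous_iff_continuousAt.mpr fun u => (hτ u).continuousAt).surjective
      (hqper.tendsto_atTop_intervalIntegral_of_pos' (hq.intervalIntegrable _ _) hqpos hL)
      (hqper.tendsto_atBot_intervalIntegral_of_pos' (hq.intervalIntegrable _ _) hqpos hL)
  have hτadd : ∀ u, τ (u + L) = τ u + τ L := fun u => by
    simpa only [zero_add] using
      hqper.intervalIntegral_add_eq_add 0 u fun _ _ => hq.intervalIntegrable _ _
  set e := hτmono.orderIsoOfSurjective τ hτsurj
  have hτe : ∀ t, τ (e.symm t) = t := e.apply_symm_apply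
  refine ⟨e.symm, τ L, ?_, fun t => ?_, fun t => ?_, e.symm.surjective⟩
  · simpa using intervalIntegral.intervalIntegral_pos_of_pos (hq.intervalIntegrable 0 L) hqpos hL
  · simpa using (hτ (e.symm t)).of_local_left_inverse e.symm.continuous.continuousAt
      (inv_ne_zero (hpos _).ne') (Eventually.of_forall hτe)
  · exact hτmono.injective (by rw [hτe, hτadd, hτe])

structure IsPotentialWell (g : ℝ → ℝ) (E s₁ s₂ : ℝ) : Prop where
  lt : s₁ < s₂
  apply_left : g s₁ = E
  apply_right : g s₂ = E
  apply_lt : ∀ s ∈ Ioo s₁ s₂, g s < E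
  deriv_left : deriv g s₁ < 0
  deriv_right : 0 < deriv g s₂

theorem exists_isPotentialWell {f f' : ℝ → ℝ} {a c d E : ℝ}
    (hf : ∀ s, HasDerivAt f (f' s) s) (hneg : ∀ s < c, f' s < 0) (hpos : ∀ s > c, 0 < f' s)
    (hac : a < c) (hcd : c < d) (hc : f c < E) (ha : E < f a) (hd : E < f d) :
    ∃ s₁ s₂, IsPotentialWell f E s₁ s₂ := by
  have hcont : Continuous f := continuous_iff_continuousAt.mpr fun s => (hf s).continuousAt
  have hanti : StrictAntiOn f (Iic c) :=
    strictAntiOn_of_hasDerivWithinAt_neg (convex_Iic c) hcont.continuousOn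
      (fun s _ => (hf s).hasDerivWithinAt) fun s hs => hneg s (by simpa using hs)
  have hmono : StrictMonoOn f (Ici c) :=
    strictMonoOn_of_hasDerivWithinAt_pos (convex_Ici c) hcont.continuousOn
      (fun s _ => (hf s).hasDerivWithinAt) fun s hs => hpos s (by simpa using hs)
  obtain ⟨s₁, hs₁, h₁⟩ := intermediate_value_Ioo' hac.le hcont.continuousOn ⟨hc, ha⟩
  obtain ⟨s₂, hs₂, h₂⟩ := intermediate_value_Ioo hcd.le hcont.continuousOn ⟨hc, hd⟩
  refine ⟨s₁, s₂, hs₁.2.trans hs₂.1, h₁, h₂, fun s hs => ?_, ?_, ?_⟩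
  · rcases le_total s c with hsc | hsc
    · exact h₁ ▸ hanti hs₁.2.le hsc hs.1
    · exact h₂ ▸ hmono hsc hs₂.1.le hs.2
  · rw [(hf s₁).deriv]; exact hneg s₁ hs₁.2
  · rw [(hf s₂).deriv]; exact hpos s₂ hs₂.1

theorem hasDerivAt_const_sub_comp_sub_mul {g : ℝ → ℝ} {E μ ρ c : ℝ}
    (hg : DifferentiableAt ℝ g (μ - ρ * c)) :
    HasDerivAt (fun u => E - g (μ - ρ * u)) (ρ * deriv g (μ - ρ * c)) c :=
  ((hg.hasDerivAt.comp c (((hasDerivAt_id' c).const_mul ρ).const_sub μ)).const_sub E).congr_deriv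
    (by ring)

theorem IsPotentialWell.exists_profile {g : ℝ → ℝ} {E s₁ s₂ : ℝ}
    (hg : AnalyticOnNhd ℝ g univ) (hw : IsPotentialWell g E s₁ s₂) :
    ∃ K : ℝ → ℝ, Differentiable ℝ K ∧ (∀ u ∈ Icc (-1 : ℝ) 1, 0 < K u) ∧
      ∀ u, E - g ((s₁ + s₂) / 2 - (s₂ - s₁) / 2 * u) = (1 - u ^ 2) * K u := by
  have hρ : 0 < (s₂ - s₁) / 2 := by linarith [hw.lt]
  have hg' : Differentiable ℝ g := differentiableOn_univ.mp hg.differentiableOn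
  have hμ₁ : (s₁ + s₂) / 2 - (s₂ - s₁) / 2 * 1 = s₁ := by ring
  have hμ₂ : (s₁ + s₂) / 2 - (s₂ - s₁) / 2 * -1 = s₂ := by ring
  refine exists_pos_eq_one_sub_sq_mul (fun u _ => analyticAt_const.sub ((hg _ trivial).comp
      (by fun_prop))) (by simp only [hμ₁, hw.apply_left, sub_self])
    (by simp only [hμ₂, hw.apply_right, sub_self])
    (fun u hu => sub_pos.mpr (hw.apply_lt _ ⟨by nlinarith [hu.2], by nlinarith [hu.1]⟩)) ?_ ?_
  · rw [(hasDerivAt_const_sub_comp_sub_mul (hg' _)).deriv, hμ₁]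
    exact mul_neg_of_pos_of_neg hρ hw.deriv_left
  · rw [(hasDerivAt_const_sub_comp_sub_mul (hg' _)).deriv, hμ₂]
    exact mul_pos hρ hw.deriv_right

noncomputable def orbitSpeed (k μ ρ : ℝ) (K : ℝ → ℝ) (σ : ℝ) : ℝ :=
  √(exp (2 * k * (μ - ρ * cos σ)) * K (cos σ))

section OrbitSpeed

variable {K : ℝ → ℝ} {k μ ρ : ℝ}

theorem orbitSpeed_pos (hKpos : ∀ u ∈ Icc (-1 : ℝ) 1, 0 < K u) (σ : ℝ) :
    0 < orbitSpeed k μ ρ K σ :=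
  sqrt_pos.mpr (mul_pos (exp_pos _) (hKpos _ ⟨neg_one_le_cos σ, cos_le_one σ⟩))

theorem periodic_orbitSpeed : Periodic (orbitSpeed k μ ρ K) (2 * π) := fun σ => by
  simp only [orbitSpeed, cos_add_two_pi]

theorem hasDerivAt_orbitSpeed (hK : Differentiable ℝ K)
    (hKpos : ∀ u ∈ Icc (-1 : ℝ) 1, 0 < K u) (σ : ℝ) :
    HasDerivAt (orbitSpeed k μ ρ K)
      (exp (2 * k * (μ - ρ * cos σ)) * sin σ * (2 * k * ρ * K (cos σ) - deriv K (cos σ))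
        / (2 * orbitSpeed k μ ρ K σ)) σ := by
  have hS := (((hasDerivAt_cos σ).const_mul ρ).const_sub μ).const_mul (2 * k)
  have hψ := hS.exp.mul ((hK (cos σ)).hasDerivAt.comp σ (hasDerivAt_cos σ))
  refine (hψ.sqrt (mul_pos (exp_pos _)
    (hKpos _ ⟨neg_one_le_cos σ, cos_le_one σ⟩)).ne').congr_deriv ?_
  simp only [orbitSpeed, comp_apply, Pi.mul_apply]
  ring

theorem hasDerivAt_neg_sin_mul_orbitSpeed {F g : ℝ → ℝ} {E : ℝ} (hg : Differentiable ℝ g)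
    (hgF : ∀ s, exp (2 * k * s) * deriv g s = 2 * F (exp s)) (hK : Differentiable ℝ K)
    (hKpos : ∀ u ∈ Icc (-1 : ℝ) 1, 0 < K u)
    (hGK : ∀ u, E - g (μ - ρ * u) = (1 - u ^ 2) * K u) (σ : ℝ) :
    HasDerivAt (fun σ => -(sin σ * orbitSpeed k μ ρ K σ))
      (ρ * (F (exp (μ - ρ * cos σ)) - k * (sin σ * orbitSpeed k μ ρ K σ) ^ 2)
        / orbitSpeed k μ ρ K σ) σ := by
  have hq := orbitSpeed_pos (k := k) (μ := μ) (ρ := ρ) hKpos σ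
  have hq2 : orbitSpeed k μ ρ K σ ^ 2 = exp (2 * k * (μ - ρ * cos σ)) * K (cos σ) :=
    sq_sqrt (mul_pos (exp_pos _) (hKpos _ ⟨neg_one_le_cos σ, cos_le_one σ⟩)).le
  have hGd : ∀ c, -(2 * c) * K c + (1 - c ^ 2) * deriv K c = ρ * deriv g (μ - ρ * c) := by
    intro c
    have h₁ : HasDerivAt (fun u => (1 - u ^ 2) * K u)
        (-(2 * c) * K c + (1 - c ^ 2) * deriv K c) c :=
      (((hasDerivAt_pow 2 c).const_sub 1).mul (hK c).hasDerivAt).congr_deriv (by ring)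
    have h₂ := hasDerivAt_const_sub_comp_sub_mul (E := E) (hg (μ - ρ * c))
    simp only [hGK] at h₂
    exact h₁.unique h₂
  refine (((hasDerivAt_sin σ).mul (hasDerivAt_orbitSpeed hK hKpos σ)).neg).congr_deriv ?_
  field_simp
  rw [mul_comm (cos σ) ρ]
  linear_combination (-2 * cos σ + 2 * ρ * k * sin σ ^ 2) * hq2
    + exp (2 * k * (μ - ρ * cos σ)) * deriv K (cos σ) * sin_sq σ
    + exp (2 * k * (μ - ρ * cos σ)) * hGd (cos σ) + ρ * hgF (μ - ρ * cos σ)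

end OrbitSpeed

theorem IsPotentialWell.exists_periodic_solution {F g : ℝ → ℝ} {k E s₁ s₂ : ℝ}
    (hg : AnalyticOnNhd ℝ g univ) (hgF : ∀ s, exp (2 * k * s) * deriv g s = 2 * F (exp s))
    (hw : IsPotentialWell g E s₁ s₂) :
    ∃ x y : ℝ → ℝ,
      (∀ t, HasDerivAt x (-(x t * y t)) t) ∧
      (∀ t, HasDerivAt y (F (x t) - k * y t ^ 2) t) ∧
      (∀ t, 0 < x t) ∧
      (¬ ∃ c : ℝ × ℝ, ∀ t, (x t, y t) = c) ∧
      (∃ T > (0 : ℝ), ∀ t, x (t + T) = x t ∧ y (t + T) = y t) := by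
  obtain ⟨K, hK, hKpos, hGK⟩ := hw.exists_profile hg
  set μ := (s₁ + s₂) / 2
  set ρ := (s₂ - s₁) / 2
  have hρ : 0 < ρ := by simp only [ρ]; linarith [hw.lt]
  set q := orbitSpeed k μ ρ K
  have hqpos := orbitSpeed_pos (k := k) (μ := μ) (ρ := ρ) hKpos
  obtain ⟨φ, T, hT, hφ, hφT, hφsurj⟩ :=
    exists_hasDerivAt_comp_of_periodic (p := fun σ => q σ / ρ)
      ((continuous_iff_continuousAt.mpr fun σ =>
        (hasDerivAt_orbitSpeed hK hKpos σ).continuousAt).div_const ρ)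
      (fun σ => div_pos (hqpos σ) hρ) (fun σ => by simp only [q, periodic_orbitSpeed σ])
      two_pi_pos
  refine ⟨fun t => exp (μ - ρ * cos (φ t)), fun t => -(sin (φ t) * q (φ t)), fun t => ?_,
    fun t => ?_, fun t => exp_pos _, ?_, T, hT, fun t => ?_⟩
  · refine ((((hasDerivAt_cos _).const_mul ρ).const_sub μ).exp.comp t (hφ t)).congr_deriv ?_
    field_simp [(hqpos (φ t)).ne']
  · refine ((hasDerivAt_neg_sin_mul_orbitSpeed (differentiableOn_univ.mp hg.differentiableOn)
      hgF hK hKpos hGK (φ t)).comp t (hφ t)).congr_deriv ?_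
    field_simp [(hqpos (φ t)).ne']
    ring
  · rintro ⟨c, hc⟩
    obtain ⟨t₁, ht₁⟩ := hφsurj 0
    obtain ⟨t₂, ht₂⟩ := hφsurj π
    have := congrArg Prod.fst ((hc t₁).trans (hc t₂).symm)
    simp only [ht₁, ht₂, cos_zero, cos_pi, exp_eq_exp] at this
    linarith
  · simp only [hφT, cos_add_two_pi, sin_add_two_pi, q, periodic_orbitSpeed _, and_self]

noncomputable def potential (γ b s : ℝ) : ℝ :=
  exp (-(3 * γ - 2) * s) * (1 - 2 * b / 3 * exp s)

section Potential

variable (γ b : ℝ)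

theorem hasDerivAt_potential (s : ℝ) :
    HasDerivAt (potential γ b)
      (exp (-(3 * γ - 2) * s) * (2 * b * (γ - 1) * exp s - (3 * γ - 2))) s := by
  have h := (((hasDerivAt_id' s).const_mul (-(3 * γ - 2))).exp).fun_mul
    (((hasDerivAt_exp s).const_mul (2 * b / 3)).const_sub 1)
  exact h.congr_deriv (by ring)

theorem analyticOnNhd_potential : AnalyticOnNhd ℝ (potential γ b) univ := by
  intro s _
  unfold potential
  fun_prop

theorem exp_mul_deriv_potential (s : ℝ) :
    exp (3 * γ * s) * deriv (potential γ b) s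
      = 2 * (b * (γ - 1) * exp s ^ 3 - (3 * γ - 2) / 2 * exp s ^ 2) := by
  have h : exp (3 * γ * s) * exp (-(3 * γ - 2) * s) = exp s ^ 2 := by
    rw [← exp_add, ← exp_nat_mul]; ring_nf
  rw [(hasDerivAt_potential γ b s).deriv, ← mul_assoc, h]
  ring

theorem tendsto_potential_atTop (hγ : 1 < γ) : Tendsto (potential γ b) atTop (𝓝 0) := by
  have hdecay : ∀ c < 0, Tendsto (fun s => exp (c * s)) atTop (𝓝 0) := fun c hc =>
    tendsto_exp_atBot.comp (tendsto_id.const_mul_atTop_of_neg hc)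
  have h := (hdecay _ (by linarith : -(3 * γ - 2) < 0)).sub
    ((hdecay _ (by linarith : -(3 * γ - 3) < 0)).const_mul (2 * b / 3))
  rw [mul_zero, sub_zero] at h
  refine h.congr fun s => ?_
  rw [potential, show -(3 * γ - 3) * s = -(3 * γ - 2) * s + s by ring, exp_add]
  ring

theorem exists_isPotentialWell_potential (hγ : 1 < γ) (hb : 0 < b) :
    ∃ E s₁ s₂, IsPotentialWell (potential γ b) E s₁ s₂ := by
  have hβ : 0 < 2 * b * (γ - 1) := by nlinarith
  set c := log ((3 * γ - 2) / (2 * b * (γ - 1)))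
  have hec : exp c * (2 * b * (γ - 1)) = 3 * γ - 2 := by
    rw [exp_log (div_pos (by linarith) hβ), div_mul_cancel₀ _ hβ.ne']
  have hc : potential γ b c < 0 := mul_neg_of_pos_of_neg (exp_pos _) (by nlinarith)
  set a := min c (log (3 / (2 * b))) - 1
  have ha : 0 < potential γ b a := by
    have : exp a < 3 / (2 * b) := by
      rw [← exp_log (by positivity : (0 : ℝ) < 3 / (2 * b)), exp_lt_exp]
      linarith [min_le_right c (log (3 / (2 * b)))]
    rw [lt_div_iff₀ (by positivity)] at this
    exact mul_pos (exp_pos _) (by linarith)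
  obtain ⟨d, hd, hcd⟩ := (((tendsto_potential_atTop γ b hγ).eventually
    (lt_mem_nhds (by linarith : potential γ b c / 2 < 0))).and (eventually_gt_atTop c)).exists
  exact ⟨_, exists_isPotentialWell (hasDerivAt_potential γ b)
    (fun s hs => mul_neg_of_pos_of_neg (exp_pos _) (by nlinarith [exp_lt_exp.mpr hs]))
    (fun s hs => mul_pos (exp_pos _) (by nlinarith [exp_lt_exp.mpr hs]))
    (by linarith [min_le_left c (log (3 / (2 * b)))] : a < c) hcd
    (by linarith : potential γ b c < potential γ b c / 2) (by linarith) hd⟩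

end Potential

/-- Theorem 2(iii), existence: for every `γ ∈ (1, 2]` and every `b > 0`, the
planar system possesses a nonconstant periodic solution in the half-plane `x > 0`. -/
theorem exists_periodic_solution
    (γ b : ℝ) (hγ : γ ∈ Set.Ioc (1 : ℝ) 2) (hb : 0 < b) :
    ∃ x y : ℝ → ℝ,
      (∀ t, HasDerivAt x (-(x t * y t)) t) ∧
      (∀ t, HasDerivAt y
        (b * (γ - 1) * x t ^ 3 - (3 * γ - 2) / 2 * x t ^ 2 - 3 * γ / 2 * y t ^ 2) t) ∧
      (∀ t, 0 < x t) ∧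
      (¬ ∃ c : ℝ × ℝ, ∀ t, (x t, y t) = c) ∧
      (∃ T > (0 : ℝ), ∀ t, x (t + T) = x t ∧ y (t + T) = y t) := by
  obtain ⟨E, s₁, s₂, hw⟩ := exists_isPotentialWell_potential γ b hγ.1 hb
  refine hw.exists_periodic_solution (F := fun x => b * (γ - 1) * x ^ 3 - (3 * γ - 2) / 2 * x ^ 2)
    (analyticOnNhd_potential γ b) fun s => ?_
  rw [show 2 * (3 * γ / 2) * s = 3 * γ * s by ring]
  exact exp_mul_deriv_potential γ b s
end

section
/- (Theorem 2(iii), basin) For every γ ∈ (1, 2] and every b > 0, every solution of the planar system whose initial condition lies in the set B = {(x, y) ∈ ℝ² : y² + x² - (2b/3)·x³ < 0 and x > 0} is periodic. Precisely: if x, y : ℝ → ℝ are differentiable functions satisfying x'(t) = -x(t)·y(t) and y'(t) = b(γ-1)·x(t)³ - ((3γ-2)/2)·x(t)² - (3γ/2)·y(t)² for all t, and x(0) > 0 and y(0)² + x(0)² - (2b/3)·x(0)³ < 0, then there exists T > 0 with x(t+T) = x(t) and y(t+T) = y(t) for all t. -/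
/-!
With `I t = ∫₀ᵗ y`, the equation for `x` integrates to `x = x 0 · e^{-I}`, and
`F = y² + x² - (2b/3) x³` satisfies `F' = -3γ y F`, so `F = F 0 · e^{-3γ I}`. Substituting, `I`
obeys a one-dimensional Newton equation `I'' = accel I` with energy relation `(I')² = speedSq I`.
For `F 0 < 0` and `γ > 1` the region `{speedSq ≥ 0}` is bounded, and `e^{3w} · speedSq w` is
strictly concave, so `speedSq` and its derivative `2 accel` never vanish together at a boundary
point of that region: the motion of `I` cannot creep towards a rest point, and `y = I'` vanishes at
arbitrarily late times. The system is reversible under `(t, x, y) ↦ (-t, x, -y)`, so every zero of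
`y` is a centre of symmetry of the orbit, and two of them, at times `s₁ < s₂`, make the solution
`2 (s₂ - s₁)`-periodic.
-/

open Real Set Filter Topology

section Reversible

variable {E : Type*} [NormedAddCommGroup E] [NormedSpace ℝ E] {V : E → E}

theorem ODE_solution_unique_univ_of_contDiff (hV : ContDiff ℝ 1 V) {f g : ℝ → E}
    (hf : ∀ t, HasDerivAt f (V (f t)) t) (hg : ∀ t, HasDerivAt g (V (g t)) t) {t₀ : ℝ}
    (heq : f t₀ = g t₀) : f = g := by
  have hopen : IsOpen {t | f t = g t} := by
    refine isOpen_iff_mem_nhds.2 fun t (ht : f t = g t) => ?_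
    obtain ⟨K, s, hs, hK⟩ := hV.contDiffAt.exists_lipschitzOnWith (x := f t)
    have hfs : ∀ᶠ τ in 𝓝 t, f τ ∈ s := (hf t).continuousAt.preimage_mem_nhds hs
    have hgs : ∀ᶠ τ in 𝓝 t, g τ ∈ s := (hg t).continuousAt.preimage_mem_nhds (ht ▸ hs)
    exact ODE_solution_unique_of_eventually (v := fun _ => V) (Eventually.of_forall fun _ => hK)
      (hfs.mono fun τ h => ⟨hf τ, h⟩) (hgs.mono fun τ h => ⟨hg τ, h⟩) ht
  have hclosed : IsClosed {t | f t = g t} :=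
    isClosed_eq (Differentiable.continuous fun t => (hf t).differentiableAt)
      (Differentiable.continuous fun t => (hg t).differentiableAt)
  have huniv := IsClopen.eq_univ ⟨hclosed, hopen⟩ ⟨t₀, heq⟩
  exact funext fun t => (huniv ▸ mem_univ t : t ∈ {t | f t = g t})

variable {R : E →L[ℝ] E} {u : ℝ → E}

theorem ODE_solution_reverse_of_fixed (hV : ContDiff ℝ 1 V) (hVR : ∀ p, V (R p) = -R (V p))
    (hu : ∀ t, HasDerivAt u (V (u t)) t) {s : ℝ} (hs : R (u s) = u s) (t : ℝ) :
    R (u (2 * s - t)) = u t := by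
  have hrev : ∀ t, HasDerivAt (fun t => R (u (2 * s - t))) (V (R (u (2 * s - t)))) t := by
    intro t
    rw [hVR]
    exact (R.hasFDerivAt.comp_hasDerivAt t
      ((hu (2 * s - t)).scomp t ((hasDerivAt_id t).const_sub (2 * s)))).congr_deriv (by simp)
  refine congrFun (ODE_solution_unique_univ_of_contDiff hV hrev hu (t₀ := s) ?_) t
  rwa [two_mul, add_sub_cancel_right]

theorem ODE_solution_periodic_of_fixed (hV : ContDiff ℝ 1 V) (hR : ∀ p, R (R p) = p)
    (hVR : ∀ p, V (R p) = -R (V p)) (hu : ∀ t, HasDerivAt u (V (u t)) t) {s₁ s₂ : ℝ}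
    (h₁ : R (u s₁) = u s₁) (h₂ : R (u s₂) = u s₂) :
    Function.Periodic u (2 * (s₂ - s₁)) := fun t =>
  calc u (t + 2 * (s₂ - s₁)) = R (R (u (2 * s₂ - (2 * s₁ - t)))) := by rw [hR]; ring_nf
    _ = u t := by
      rw [ODE_solution_reverse_of_fixed hV hVR hu h₂, ODE_solution_reverse_of_fixed hV hVR hu h₁]

end Reversible

theorem eq_zero_of_tendsto_of_tendsto_deriv {f f' : ℝ → ℝ} {l c : ℝ}
    (hf : ∀ t, HasDerivAt f (f' t) t) (hl : Tendsto f atTop (𝓝 l))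
    (hc : Tendsto f' atTop (𝓝 c)) : c = 0 := by
  have hdiff : Tendsto (fun t => f (t + 1) - f t) atTop (𝓝 c) := by
    refine Metric.tendsto_atTop.2 fun ε hε => ?_
    obtain ⟨T, hT⟩ := Metric.tendsto_atTop.1 hc ε hε
    refine ⟨T, fun t ht => ?_⟩
    obtain ⟨ξ, hξ, hslope⟩ := exists_hasDerivAt_eq_slope f f' (lt_add_one t)
      (HasDerivAt.continuousOn fun τ _ => hf τ) fun τ _ => hf τ
    rw [add_sub_cancel_left, div_one] at hslope
    rw [← hslope]
    exact hT ξ (ht.trans hξ.1.le)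
  have hzero : Tendsto (fun t => f (t + 1) - f t) atTop (𝓝 (l - l)) :=
    (hl.comp (tendsto_atTop_add_const_right _ 1 tendsto_id)).sub hl
  rw [sub_self] at hzero
  exact tendsto_nhds_unique hdiff hzero

theorem MonotoneOn.exists_tendsto_atTop {f : ℝ → ℝ} {a : ℝ} (hf : MonotoneOn f (Ici a))
    (hb : BddAbove (range f)) :
    ∃ L, Tendsto f atTop (𝓝 L) ∧ ∀ t, a ≤ t → f t ≤ L := by
  have hmono : Monotone fun t => f (max a t) := fun s t hst =>
    hf (le_max_left a s) (le_max_left a t) (max_le_max le_rfl hst)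
  have hbdd : BddAbove (range fun t => f (max a t)) := hb.mono (range_comp_subset_range _ f)
  refine ⟨⨆ t, f (max a t), ?_, fun t ht => ?_⟩
  · refine (tendsto_atTop_ciSup hmono hbdd).congr' ?_
    filter_upwards [eventually_ge_atTop a] with t ht
    rw [max_eq_right ht]
  · simpa [max_eq_right ht] using le_ciSup hbdd t

theorem StrictConcaveOn.lt_of_hasDerivAt_eq_zero {g : ℝ → ℝ} (hg : StrictConcaveOn ℝ univ g)
    {s L : ℝ} (hL : HasDerivAt g 0 L) (hs : s ≠ L) : g s < g L := by
  rcases hs.lt_or_gt with h | h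
  · have := hg.lt_slope_of_hasDerivAt trivial trivial h hL
    rw [slope_def_field, lt_div_iff₀ (sub_pos.2 h)] at this
    linarith
  · have := hg.slope_lt_of_hasDerivAt trivial trivial h hL
    rw [slope_def_field, div_lt_iff₀ (sub_pos.2 h)] at this
    linarith

theorem eq_mul_exp_integral {f y : ℝ → ℝ} (hy : Continuous y) (c : ℝ)
    (hf : ∀ t, HasDerivAt f (c * y t * f t) t) (t : ℝ) :
    f t = f 0 * exp (c * ∫ s in (0)..t, y s) := by
  set I := fun t => ∫ s in (0)..t, y s
  have hI : ∀ t, HasDerivAt I (y t) t := fun t => hy.integral_hasStrictDerivAt 0 t |>.hasDerivAt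
  have hconst : ∀ t, HasDerivAt (fun t => f t * exp (-(c * I t))) 0 t := fun t =>
    ((hf t).mul ((hI t).const_mul c).neg.exp).congr_deriv (by ring)
  have h := is_const_of_deriv_eq_zero (fun t => (hconst t).differentiableAt)
    (fun t => (hconst t).deriv) t 0
  simp only [I, intervalIntegral.integral_same, mul_zero, neg_zero, exp_zero, mul_one] at h
  rw [← h, mul_assoc, ← exp_add, neg_add_cancel, exp_zero, mul_one]

section Newton

variable {u v G h : ℝ → ℝ}

theorem not_forall_pos_of_sq_eq (hu : ∀ t, HasDerivAt u (v t) t)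
    (hv : ∀ t, HasDerivAt v (h (u t)) t) (hvG : ∀ t, v t ^ 2 = G (u t)) (hG : Continuous G)
    (hh : Continuous h) (hbdd : BddAbove {w | 0 ≤ G w})
    (hturn : ∀ s L, s ≠ L → 0 ≤ G s → G L = 0 → h L ≠ 0) (a : ℝ) :
    ¬ ∀ t, a < t → 0 < v t := by
  intro hpos
  have hGu : ∀ t, 0 ≤ G (u t) := fun t => hvG t ▸ sq_nonneg (v t)
  have hmono : StrictMonoOn u (Ici a) := by
    refine strictMonoOn_of_deriv_pos (convex_Ici a)
      (HasDerivAt.continuousOn fun t _ => hu t) fun t ht => ?_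
    rw [interior_Ici] at ht
    rw [(hu t).deriv]
    exact hpos t ht
  obtain ⟨L, huL, hle⟩ := hmono.monotoneOn.exists_tendsto_atTop
    (hbdd.mono (range_subset_iff.2 hGu))
  have hGL : Tendsto (fun t => G (u t)) atTop (𝓝 (G L)) := (hG.tendsto L).comp huL
  have hvL : Tendsto v atTop (𝓝 (√(G L))) := by
    refine ((continuous_sqrt.tendsto _).comp hGL).congr' ?_
    filter_upwards [eventually_gt_atTop a] with t ht
    rw [Function.comp_apply, ← hvG, sqrt_sq (hpos t ht).le]
  have hGL0 : G L = 0 := by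
    rw [← sqrt_eq_zero (ge_of_tendsto' hGL hGu)]
    exact eq_zero_of_tendsto_of_tendsto_deriv hu huL hvL
  have hhL : h L = 0 := by
    rw [hGL0, sqrt_zero] at hvL
    exact eq_zero_of_tendsto_of_tendsto_deriv hv hvL ((hh.tendsto L).comp huL)
  have hlt : u (a + 1) < L :=
    (hmono (mem_Ici.2 (by linarith)) (mem_Ici.2 (by linarith)) (lt_add_one (a + 1))).trans_le
      (hle _ (by linarith))
  exact hturn _ _ hlt.ne (hGu _) hGL0 hhL

theorem exists_gt_eq_zero_of_sq_eq (hu : ∀ t, HasDerivAt u (v t) t)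
    (hv : ∀ t, HasDerivAt v (h (u t)) t) (hvG : ∀ t, v t ^ 2 = G (u t)) (hG : Continuous G)
    (hh : Continuous h) (hbdd : Bornology.IsBounded {w | 0 ≤ G w})
    (hturn : ∀ s L, s ≠ L → 0 ≤ G s → G L = 0 → h L ≠ 0) (a : ℝ) :
    ∃ t, a < t ∧ v t = 0 := by
  by_contra! hne
  rcases isPreconnected_Ioi.mapsTo_Ioi_or_Iio
    (HasDerivAt.continuousOn fun t _ => hv t) hne with hpos | hneg
  · exact not_forall_pos_of_sq_eq hu hv hvG hG hh hbdd.bddAbove hturn a fun t ht => hpos ht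
  · refine not_forall_pos_of_sq_eq (u := -u) (v := -v) (G := fun w => G (-w))
      (h := fun w => -h (-w)) (fun t => (hu t).neg) (fun t => by simpa using (hv t).neg)
      (fun t => by simpa using hvG t) (hG.comp continuous_neg) (hh.comp continuous_neg).neg
      ?_ (fun s L hsL hs hL => by simpa using hturn (-s) (-L) (neg_injective.ne hsL) hs hL) a
      fun t ht => neg_pos.2 (hneg ht)
    simpa using hbdd.neg.bddAbove

end Newton

noncomputable def basinFunction (b x y : ℝ) : ℝ := y ^ 2 + x ^ 2 - 2 * b / 3 * x ^ 3

/-- Along a solution, `y² = speedSq γ b (x 0) F₀ (∫₀ᵗ y)` and `y' = accel γ b (x 0) F₀ (∫₀ᵗ y)`,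
where `F₀ = basinFunction b (x 0) (y 0)`. -/
noncomputable def speedSq (γ b x₀ F₀ w : ℝ) : ℝ :=
  F₀ * exp (-(3 * γ) * w) - (x₀ * exp (-w)) ^ 2 + 2 * b / 3 * (x₀ * exp (-w)) ^ 3

noncomputable def accel (γ b x₀ F₀ w : ℝ) : ℝ :=
  -(3 * γ / 2) * F₀ * exp (-(3 * γ) * w) + (x₀ * exp (-w)) ^ 2 - b * (x₀ * exp (-w)) ^ 3

section Potential

variable {γ b x₀ F₀ : ℝ}

theorem continuous_speedSq : Continuous (speedSq γ b x₀ F₀) := by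
  unfold speedSq; fun_prop

theorem continuous_accel : Continuous (accel γ b x₀ F₀) := by
  unfold accel; fun_prop

theorem speedSq_mul_exp (w : ℝ) : speedSq γ b x₀ F₀ w * exp (3 * w) =
    F₀ * exp ((3 - 3 * γ) * w) - x₀ ^ 2 * exp w + 2 * b / 3 * x₀ ^ 3 := by
  have h3 : exp (-w) ^ 3 * exp (3 * w) = 1 := by
    rw [← exp_nat_mul, ← exp_add]; norm_num
  have h2 : exp (-w) ^ 2 * exp (3 * w) = exp w := by
    rw [← exp_nat_mul, ← exp_add]; norm_num; ring_nf
  have hγ : exp (-(3 * γ) * w) * exp (3 * w) = exp ((3 - 3 * γ) * w) := by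
    rw [← exp_add]; ring_nf
  simp only [speedSq, mul_pow]
  linear_combination F₀ * hγ - x₀ ^ 2 * h2 + 2 * b / 3 * x₀ ^ 3 * h3

theorem isBounded_setOf_speedSq_nonneg (hγ : 1 < γ) (hx₀ : x₀ ≠ 0) (hF₀ : F₀ < 0) :
    Bornology.IsBounded {w | 0 ≤ speedSq γ b x₀ F₀ w} := by
  refine (Metric.isBounded_Icc (2 * b / 3 * x₀ ^ 3 / F₀ / (3 * γ - 3)) (2 * b / 3 * x₀)).subset
    fun w hw => ?_
  have hg : 0 ≤ F₀ * exp ((3 - 3 * γ) * w) - x₀ ^ 2 * exp w + 2 * b / 3 * x₀ ^ 3 := by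
    rw [← speedSq_mul_exp]; exact mul_nonneg hw (exp_pos _).le
  have hx₀2 : 0 < x₀ ^ 2 := by positivity
  have h1 := add_one_le_exp w
  have h2 := add_one_le_exp ((3 - 3 * γ) * w)
  have he1 := exp_pos w
  have he2 := exp_pos ((3 - 3 * γ) * w)
  constructor
  · rw [div_le_iff₀ (by linarith), div_le_iff_of_neg hF₀]
    nlinarith
  · nlinarith

theorem hasDerivAt_speedSq (w : ℝ) :
    HasDerivAt (speedSq γ b x₀ F₀) (2 * accel γ b x₀ F₀ w) w := by
  have hE : HasDerivAt (fun w => x₀ * exp (-w)) (-(x₀ * exp (-w))) w :=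
    ((hasDerivAt_neg w).exp.const_mul x₀).congr_deriv (by ring)
  exact ((((hasDerivAt_id' w).const_mul (-(3 * γ))).exp.const_mul F₀).sub (hE.pow 2) |>.add
    ((hE.pow 3).const_mul (2 * b / 3))).congr_deriv (by simp only [accel]; ring)

theorem accel_ne_zero (hγ : 1 < γ) (hF₀ : F₀ < 0) {s L : ℝ} (hsL : s ≠ L)
    (hs : 0 ≤ speedSq γ b x₀ F₀ s) (hL : speedSq γ b x₀ F₀ L = 0) :
    accel γ b x₀ F₀ L ≠ 0 := by
  intro haccel
  set g : ℝ → ℝ := fun w => speedSq γ b x₀ F₀ w * exp (3 * w)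
  have hgL : HasDerivAt g 0 L :=
    ((hasDerivAt_speedSq L).mul ((hasDerivAt_id' L).const_mul 3).exp).congr_deriv
      (by simp [hL, haccel])
  have hconc : StrictConcaveOn ℝ univ g := by
    have hg' : ∀ w,
        HasDerivAt g ((3 - 3 * γ) * F₀ * exp ((3 - 3 * γ) * w) - x₀ ^ 2 * exp w) w := by
      intro w
      rw [show g = _ from funext speedSq_mul_exp]
      exact (((((hasDerivAt_id' w).const_mul (3 - 3 * γ)).exp.const_mul F₀).sub
        ((hasDerivAt_exp w).const_mul (x₀ ^ 2))).add_const _).congr_deriv (by ring)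
    refine StrictAnti.strictConcaveOn_univ_of_deriv
      (Differentiable.continuous fun w => (hg' w).differentiableAt) fun v w hvw => ?_
    rw [(hg' v).deriv, (hg' w).deriv]
    have hk : 0 < (3 - 3 * γ) * F₀ := mul_pos_of_neg_of_neg (by linarith) hF₀
    nlinarith [mul_lt_mul_of_pos_left
      (exp_lt_exp.2 (mul_lt_mul_of_neg_left hvw (by linarith : 3 - 3 * γ < 0))) hk,
      mul_le_mul_of_nonneg_left (exp_lt_exp.2 hvw).le (sq_nonneg x₀)]
  have := hconc.lt_of_hasDerivAt_eq_zero hgL hsL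
  simp only [g, hL, zero_mul] at this
  nlinarith [exp_pos (3 * s)]

end Potential

section PlanarSolution

variable {γ b : ℝ} {x y : ℝ → ℝ}

theorem planar_x_eq (hx : ∀ t, HasDerivAt x (-(x t * y t)) t) (hy : Continuous y) (t : ℝ) :
    x t = x 0 * exp (-∫ s in (0)..t, y s) := by
  simpa using eq_mul_exp_integral hy (-1) (fun t => (hx t).congr_deriv (by ring)) t

theorem planar_basinFunction_eq (hx : ∀ t, HasDerivAt x (-(x t * y t)) t)
    (hy : ∀ t, HasDerivAt y
      (b * (γ - 1) * x t ^ 3 - (3 * γ - 2) / 2 * x t ^ 2 - 3 * γ / 2 * y t ^ 2) t) (t : ℝ) :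
    basinFunction b (x t) (y t) =
      basinFunction b (x 0) (y 0) * exp (-(3 * γ) * ∫ s in (0)..t, y s) := by
  refine eq_mul_exp_integral (f := fun t => basinFunction b (x t) (y t))
    (Differentiable.continuous fun t => (hy t).differentiableAt) _ (fun t => ?_) t
  exact ((((hy t).pow 2).add ((hx t).pow 2)).sub (((hx t).pow 3).const_mul (2 * b / 3)))
    |>.congr_deriv (by simp only [basinFunction]; ring)

theorem planar_sq_eq_speedSq (hx : ∀ t, HasDerivAt x (-(x t * y t)) t)
    (hy : ∀ t, HasDerivAt y
      (b * (γ - 1) * x t ^ 3 - (3 * γ - 2) / 2 * x t ^ 2 - 3 * γ / 2 * y t ^ 2) t) (t : ℝ) :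
    y t ^ 2 = speedSq γ b (x 0) (basinFunction b (x 0) (y 0)) (∫ s in (0)..t, y s) := by
  have hF := planar_basinFunction_eq hx hy t
  rw [speedSq, ← planar_x_eq hx (Differentiable.continuous fun t => (hy t).differentiableAt)]
  rw [basinFunction] at hF
  linarith

theorem planar_hasDerivAt_accel (hx : ∀ t, HasDerivAt x (-(x t * y t)) t)
    (hy : ∀ t, HasDerivAt y
      (b * (γ - 1) * x t ^ 3 - (3 * γ - 2) / 2 * x t ^ 2 - 3 * γ / 2 * y t ^ 2) t) (t : ℝ) :
    HasDerivAt y (accel γ b (x 0) (basinFunction b (x 0) (y 0)) (∫ s in (0)..t, y s)) t := by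
  have hx_eq := planar_x_eq hx (Differentiable.continuous fun t => (hy t).differentiableAt)
  have hsq := planar_sq_eq_speedSq hx hy t
  rw [speedSq, ← hx_eq] at hsq
  rw [accel, ← hx_eq]
  exact (hy t).congr_deriv (by linear_combination (-(3 * γ / 2)) * hsq)

end PlanarSolution

noncomputable def planarField (γ b : ℝ) (p : ℝ × ℝ) : ℝ × ℝ :=
  (-(p.1 * p.2), b * (γ - 1) * p.1 ^ 3 - (3 * γ - 2) / 2 * p.1 ^ 2 - 3 * γ / 2 * p.2 ^ 2)

def planarReverse : ℝ × ℝ →L[ℝ] ℝ × ℝ :=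
  (ContinuousLinearMap.id ℝ ℝ).prodMap (-ContinuousLinearMap.id ℝ ℝ)

@[simp]
theorem planarReverse_apply (p : ℝ × ℝ) : planarReverse p = (p.1, -p.2) := rfl

theorem contDiff_planarField (γ b : ℝ) : ContDiff ℝ 1 (planarField γ b) := by
  unfold planarField; fun_prop

theorem planarField_planarReverse (γ b : ℝ) (p : ℝ × ℝ) :
    planarField γ b (planarReverse p) = -planarReverse (planarField γ b p) := by
  simp [planarField]

theorem basin_solutions_periodic_general
    (γ b : ℝ) (hγ : γ ∈ Set.Ioc (1 : ℝ) 2)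
    (x y : ℝ → ℝ)
    (hx : ∀ t, HasDerivAt x (-(x t * y t)) t)
    (hy : ∀ t, HasDerivAt y
      (b * (γ - 1) * x t ^ 3 - (3 * γ - 2) / 2 * x t ^ 2 - 3 * γ / 2 * y t ^ 2) t)
    (hB0 : y 0 ^ 2 + x 0 ^ 2 - 2 * b / 3 * x 0 ^ 3 < 0) :
    ∃ T > (0 : ℝ), ∀ t, x (t + T) = x t ∧ y (t + T) = y t := by
  have hF₀ : basinFunction b (x 0) (y 0) < 0 := hB0
  have hx₀ : x 0 ≠ 0 := fun h => by
    rw [basinFunction, h] at hF₀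
    nlinarith [sq_nonneg (y 0)]
  have hyc : Continuous y := Differentiable.continuous fun t => (hy t).differentiableAt
  have hzero := exists_gt_eq_zero_of_sq_eq
    (fun t => (hyc.integral_hasStrictDerivAt 0 t).hasDerivAt) (planar_hasDerivAt_accel hx hy)
    (planar_sq_eq_speedSq hx hy) continuous_speedSq continuous_accel
    (isBounded_setOf_speedSq_nonneg hγ.1 hx₀ hF₀) fun _ _ => accel_ne_zero hγ.1 hF₀
  obtain ⟨s₁, -, h₁⟩ := hzero 0
  obtain ⟨s₂, h₁₂, h₂⟩ := hzero s₁
  have hper := ODE_solution_periodic_of_fixed (u := fun t => (x t, y t)) (s₁ := s₁) (s₂ := s₂)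
    (contDiff_planarField γ b) (fun p => by simp) (planarField_planarReverse γ b)
    (fun t => (hx t).prodMk (hy t)) (by simp [h₁]) (by simp [h₂])
  exact ⟨2 * (s₂ - s₁), by linarith, fun t => Prod.ext_iff.1 (hper t)⟩

/-- Theorem 2(iii), basin: for every `γ ∈ (1, 2]` and every `b > 0`, every
solution of the planar system whose initial condition lies in
`B = {(x,y) : y² + x² - (2b/3)x³ < 0, x > 0}` is periodic. -/
theorem basin_solutions_periodic
    (γ b : ℝ) (hγ : γ ∈ Set.Ioc (1 : ℝ) 2) (hb : 0 < b)
    (x y : ℝ → ℝ)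
    (hx : ∀ t, HasDerivAt x (-(x t * y t)) t)
    (hy : ∀ t, HasDerivAt y
      (b * (γ - 1) * x t ^ 3 - (3 * γ - 2) / 2 * x t ^ 2 - 3 * γ / 2 * y t ^ 2) t)
    (hx0 : 0 < x 0)
    (hB0 : y 0 ^ 2 + x 0 ^ 2 - 2 * b / 3 * x 0 ^ 3 < 0) :
    ∃ T > (0 : ℝ), ∀ t, x (t + T) = x t ∧ y (t + T) = y t :=
  basin_solutions_periodic_general γ b hγ x y hx hy hB0
end

section
/- (Theorem 1) The equilibrium point S = (u, y, ρ, H) = (0, 0, 0, 1/2) of the Einstein-frame system u' = -u·y, y' = -u + u² - 3H·y, ρ' = -3γ·ρ·H, H' = (1/4)(1-u)² - (1/2)y² - ((3γ-2)/6)ρ - H² is Lyapunov unstable for every γ ∈ [0, 2]. Precisely: there exists ε > 0 such that for every δ > 0 there exist a point p₀ ∈ ℝ⁴ with ‖p₀ - (0,0,0,1/2)‖ < δ, a time T > 0, and a differentiable function p = (u, y, ρ, H) : [0, T] → ℝ⁴ solving the above system on [0, T] with p(0) = p₀, such that ‖p(T) - (0,0,0,1/2)‖ > ε. -/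
/-!
On the invariant plane `ρ = 0` the variable `u` is pushed away from `S`. In the cone
`u + 3y ≤ 0` one has `u' = -u y ≥ u² / 3`, and as long as `u ≤ 1/10` and `|H - 1/2| ≤ 1/10`
the cone is never left, because on its boundary `(u + 3y)' = u (10u/3 - 3 + 3H) < 0`.
Starting from `(u₀, -u₀, 0, 1/2)`, `u` would gain `1/3` within time `1/u₀²`, so before that
time the solution reaches `u = 1/10`, `y = -1/10` or `|H - 1/2| = 1/10`, at distance at least
`1/10` from `S`. Solutions on such long intervals come from Picard–Lindelöf for the field
composed with the projection onto a box: that field is bounded and globally Lipschitz, and it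
agrees with the true one up to the first exit time.
-/

open Set NNReal

section General

variable {E F : Type*} [NormedAddCommGroup E] [NormedSpace ℝ E]
  [NormedAddCommGroup F] [NormedSpace ℝ F]

theorem HasDerivWithinAt.fst {f : ℝ → E × F} {f' : E × F} {s : Set ℝ} {x : ℝ}
    (h : HasDerivWithinAt f f' s x) : HasDerivWithinAt (fun t ↦ (f t).1) f'.1 s x :=
  (hasFDerivAt_fst (p := f x)).comp_hasDerivWithinAt x h

theorem HasDerivWithinAt.snd {f : ℝ → E × F} {f' : E × F} {s : Set ℝ} {x : ℝ}
    (h : HasDerivWithinAt f f' s x) : HasDerivWithinAt (fun t ↦ (f t).2) f'.2 s x :=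
  (hasFDerivAt_snd (p := f x)).comp_hasDerivWithinAt x h

theorem HasDerivWithinAt.Ici_of_Icc {f : ℝ → E} {f' : E} {a b x : ℝ}
    (h : HasDerivWithinAt f f' (Icc a b) x) (hx : x ∈ Ico a b) :
    HasDerivWithinAt f f' (Ici x) x :=
  h.mono_of_mem_nhdsWithin (Icc_mem_nhdsGE_of_mem hx)

theorem add_mul_sub_le_of_le_hasDerivWithinAt {g g' : ℝ → ℝ} {a b c : ℝ}
    (hg : ∀ t ∈ Icc a b, HasDerivWithinAt g (g' t) (Icc a b) t)
    (hc : ∀ t ∈ Ico a b, c ≤ g' t) : ∀ t ∈ Icc a b, g a + c * (t - a) ≤ g t := by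
  refine image_le_of_deriv_right_le_deriv_boundary (f' := fun _ ↦ c) (by fun_prop)
    (fun t _ ↦ ?_) (by simp) (fun t ht ↦ (hg t ht).continuousWithinAt)
    (fun t ht ↦ (hg t (Ico_subset_Icc_self ht)).Ici_of_Icc ht) hc
  simpa using ((hasDerivWithinAt_id t _).sub_const a).const_mul c |>.const_add (g a)

theorem exists_first_eq_of_continuousOn {f : ℝ → ℝ} {a b c : ℝ}
    (hf : ContinuousOn f (Icc a b)) (ha : f a < c) (hc : ∃ t ∈ Icc a b, c ≤ f t) :
    ∃ τ ∈ Ioc a b, f τ = c ∧ ∀ t ∈ Ico a τ, f t < c := by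
  set S := Icc a b ∩ f ⁻¹' Ici c
  have hS : IsClosed S := hf.preimage_isClosed_of_isClosed isClosed_Icc isClosed_Ici
  have hSne : S.Nonempty := hc
  have hSbdd : BddBelow S := ⟨a, fun t ht ↦ ht.1.1⟩
  obtain ⟨⟨haτ, hτb⟩, hcτ⟩ := hS.csInf_mem hSne hSbdd
  set τ := sInf S
  have hbefore : ∀ t ∈ Ico a τ, f t < c := fun t ht ↦
    not_le.1 fun hct ↦ ht.2.not_ge (csInf_le hSbdd ⟨⟨ht.1, ht.2.le.trans hτb⟩, hct⟩)
  have haτ' : a < τ := haτ.lt_of_ne fun h ↦ (h ▸ ha).not_ge hcτ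
  obtain ⟨t, ht, hft⟩ := intermediate_value_Icc haτ (hf.mono (Icc_subset_Icc_right hτb))
    ⟨ha.le, hcτ⟩
  obtain rfl : t = τ := ht.2.eq_of_not_lt fun hlt ↦ (hbefore t ⟨ht.1, hlt⟩).ne hft
  exact ⟨_, ⟨haτ', hτb⟩, hft, hbefore⟩

theorem exists_hasDerivWithinAt_Icc_of_lipschitzWith [CompleteSpace E] {f : E → E} {L K : ℝ≥0}
    (hb : ∀ x, ‖f x‖ ≤ L) (hl : LipschitzWith K f) (x₀ : E) {T : ℝ} (hT : 0 ≤ T) :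
    ∃ α : ℝ → E, α 0 = x₀ ∧ ∀ t ∈ Icc 0 T, HasDerivWithinAt α (f (α t)) (Icc 0 T) t := by
  have hpl : IsPicardLindelof (fun _ ↦ f) (⟨0, left_mem_Icc.2 hT⟩ : Icc 0 T) x₀
      (L * T.toNNReal) 0 L K :=
    .of_time_independent (fun x _ ↦ hb x) hl.lipschitzOnWith (by simp [hT])
  exact hpl.exists_eq_forall_mem_Icc_hasDerivWithinAt₀

theorem exists_bound_lipschitzWith_comp_of_contDiffOn {f : E → F} {π : E → E} {s : Set E}
    {Kπ : ℝ≥0} (hf : ContDiffOn ℝ 1 f s) (hs : Convex ℝ s) (hsc : IsCompact s)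
    (hπ : LipschitzWith Kπ π) (hπs : ∀ x, π x ∈ s) :
    (∃ L : ℝ≥0, ∀ x, ‖f (π x)‖ ≤ L) ∧ ∃ K, LipschitzWith K (f ∘ π) := by
  obtain ⟨C, hC⟩ := hsc.exists_bound_of_continuousOn hf.continuousOn
  obtain ⟨K, hK⟩ := hf.exists_lipschitzOnWith one_ne_zero hs hsc
  refine ⟨⟨C.toNNReal, fun x ↦ (hC _ (hπs x)).trans (Real.le_coe_toNNReal C)⟩, K * Kπ, ?_⟩
  rw [← lipschitzOnWith_univ]
  exact hK.comp hπ.lipschitzOnWith fun x _ ↦ hπs x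

end General

noncomputable section

namespace DeSitter

/-- The system on its invariant plane `ρ = 0`, in coordinates `(u, y, H)`. -/
def field (p : ℝ × ℝ × ℝ) : ℝ × ℝ × ℝ :=
  (-(p.1 * p.2.1), -p.1 + p.1 ^ 2 - 3 * p.2.2 * p.2.1,
    1 / 4 * (1 - p.1) ^ 2 - 1 / 2 * p.2.1 ^ 2 - p.2.2 ^ 2)

def box : Set (ℝ × ℝ × ℝ) := Icc 0 (1 / 10) ×ˢ Icc (-(1 / 10)) 0 ×ˢ Icc (2 / 5) (3 / 5)

def boxProj (p : ℝ × ℝ × ℝ) : ℝ × ℝ × ℝ :=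
  (projIcc 0 (1 / 10) (by norm_num) p.1, projIcc (-(1 / 10)) 0 (by norm_num) p.2.1,
    projIcc (2 / 5) (3 / 5) (by norm_num) p.2.2)

def clampedField : ℝ × ℝ × ℝ → ℝ × ℝ × ℝ := field ∘ boxProj

theorem boxProj_mem (p : ℝ × ℝ × ℝ) : boxProj p ∈ box :=
  ⟨Subtype.prop _, Subtype.prop _, Subtype.prop _⟩

theorem boxProj_of_mem {p : ℝ × ℝ × ℝ} (hp : p ∈ box) : boxProj p = p := by
  obtain ⟨h₁, h₂, h₃⟩ := hp
  simp [boxProj, projIcc_of_mem _ h₁, projIcc_of_mem _ h₂, projIcc_of_mem _ h₃]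

theorem lipschitzWith_boxProj : LipschitzWith 1 boxProj := by
  have hc {a b : ℝ} (h : a ≤ b) : LipschitzWith 1 fun x ↦ (projIcc a b h x : ℝ) :=
    (LipschitzWith.subtype_val _).comp (LipschitzWith.projIcc h) |>.weaken (by simp)
  unfold boxProj
  simpa using (hc _).comp LipschitzWith.prod_fst |>.prodMk <|
    (hc _).comp (LipschitzWith.prod_fst.comp LipschitzWith.prod_snd) |>.prodMk <|
    (hc _).comp (LipschitzWith.prod_snd.comp LipschitzWith.prod_snd)

theorem clampedField_bounded_lipschitz :
    (∃ L : ℝ≥0, ∀ p, ‖clampedField p‖ ≤ L) ∧ ∃ K, LipschitzWith K clampedField := by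
  refine exists_bound_lipschitzWith_comp_of_contDiffOn (f := field) (s := box)
    (by unfold field; fun_prop) ?_ ?_ lipschitzWith_boxProj boxProj_mem
  · exact (convex_Icc _ _).prod ((convex_Icc _ _).prod (convex_Icc _ _))
  · exact isCompact_Icc.prod (isCompact_Icc.prod isCompact_Icc)

theorem clampedField_of_mem {p : ℝ × ℝ × ℝ} (hp : p ∈ box) : clampedField p = field p := by
  simp [clampedField, boxProj_of_mem hp]

theorem clampedField_fst_nonneg (p : ℝ × ℝ × ℝ) : 0 ≤ (clampedField p).1 := by
  obtain ⟨⟨hu, -⟩, ⟨-, hy⟩, -⟩ := boxProj_mem p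
  simpa [clampedField, field] using mul_nonpos_of_nonneg_of_nonpos hu hy

theorem field_cone_inward {p : ℝ × ℝ × ℝ} (hp : p ∈ box) (hu : 0 < p.1)
    (hcone : p.1 + 3 * p.2.1 = 0) : (field p).1 + 3 * (field p).2.1 < 0 := by
  obtain ⟨⟨-, hu'⟩, -, -, hH⟩ := hp
  have hy : p.2.1 = -(p.1 / 3) := by linarith
  simp only [field, hy]
  nlinarith

def escapeNorm (p : ℝ × ℝ × ℝ) : ℝ := max p.1 (max (-p.2.1) |p.2.2 - 1 / 2|)

theorem continuous_escapeNorm : Continuous escapeNorm := by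
  unfold escapeNorm; fun_prop

theorem sq_le_of_le_escapeNorm {p : ℝ × ℝ × ℝ} {c : ℝ} (hc : 0 ≤ c) (h : c ≤ escapeNorm p) :
    c ^ 2 ≤ p.1 ^ 2 + p.2.1 ^ 2 + (p.2.2 - 1 / 2) ^ 2 := by
  rcases le_max_iff.1 h with h | h
  · nlinarith [sq_nonneg p.2.1, sq_nonneg (p.2.2 - 1 / 2)]
  rcases le_max_iff.1 h with h | h
  · nlinarith [sq_nonneg p.1, sq_nonneg (p.2.2 - 1 / 2)]
  · nlinarith [sq_nonneg p.1, sq_nonneg p.2.1, sq_abs (p.2.2 - 1 / 2)]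

section Trajectory

variable {F : ℝ → ℝ × ℝ × ℝ} {s : ℝ}

theorem fst_le_fst_of_hasDerivWithinAt_clampedField
    (hF : ∀ t ∈ Icc 0 s, HasDerivWithinAt F (clampedField (F t)) (Icc 0 s) t) :
    ∀ t ∈ Icc 0 s, (F 0).1 ≤ (F t).1 := fun t ht ↦ by
  simpa using add_mul_sub_le_of_le_hasDerivWithinAt (c := 0) (fun t ht ↦ (hF t ht).fst)
    (fun t _ ↦ clampedField_fst_nonneg _) t ht

theorem mem_box_of_escapeNorm_le
    (hF : ∀ t ∈ Icc 0 s, HasDerivWithinAt F (clampedField (F t)) (Icc 0 s) t)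
    (hu : 0 < (F 0).1) (hcone : (F 0).1 + 3 * (F 0).2.1 ≤ 0)
    (hesc : ∀ t ∈ Icc 0 s, escapeNorm (F t) ≤ 1 / 10) :
    ∀ t ∈ Icc 0 s, F t ∈ box ∧ (F t).1 + 3 * (F t).2.1 ≤ 0 := by
  have hpos : ∀ t ∈ Icc 0 s, 0 < (F t).1 := fun t ht ↦
    hu.trans_le (fst_le_fst_of_hasDerivWithinAt_clampedField hF t ht)
  have hbox : ∀ t ∈ Icc 0 s, (F t).1 + 3 * (F t).2.1 ≤ 0 → F t ∈ box := by
    intro t ht hc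
    have := hesc t ht
    simp only [escapeNorm, max_le_iff, abs_le] at this
    have := hpos t ht
    exact ⟨⟨by linarith, by linarith⟩, ⟨by linarith, by linarith⟩, by constructor <;> linarith⟩
  have hderiv : ∀ t ∈ Icc 0 s, HasDerivWithinAt (fun t ↦ (F t).1 + 3 * (F t).2.1)
      ((clampedField (F t)).1 + 3 * (clampedField (F t)).2.1) (Icc 0 s) t := fun t ht ↦
    (hF t ht).fst.add ((hF t ht).snd.fst.const_mul 3)
  have hcone_all : ∀ t ∈ Icc 0 s, (F t).1 + 3 * (F t).2.1 ≤ 0 :=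
    image_le_of_deriv_right_lt_deriv_boundary (B := fun _ ↦ 0) (B' := fun _ ↦ 0)
      (fun t ht ↦ (hderiv t ht).continuousWithinAt)
      (fun t ht ↦ (hderiv t (Ico_subset_Icc_self ht)).Ici_of_Icc ht) hcone
      (fun _ ↦ hasDerivAt_const _ _) fun t ht h ↦ by
        have ht' := Ico_subset_Icc_self ht
        rw [clampedField_of_mem (hbox t ht' h.le)]
        exact field_cone_inward (hbox t ht' h.le) (hpos t ht') h
  exact fun t ht ↦ ⟨hbox t ht (hcone_all t ht), hcone_all t ht⟩

theorem fst_add_le_of_mem_box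
    (hF : ∀ t ∈ Icc 0 s, HasDerivWithinAt F (clampedField (F t)) (Icc 0 s) t) (hs : 0 ≤ s)
    (hbox : ∀ t ∈ Icc 0 s, F t ∈ box ∧ (F t).1 + 3 * (F t).2.1 ≤ 0) :
    (F 0).1 + (F 0).1 ^ 2 / 3 * s ≤ (F s).1 := by
  have hmono := fst_le_fst_of_hasDerivWithinAt_clampedField hF
  have hu₀ : 0 ≤ (F 0).1 := (hbox 0 (left_mem_Icc.2 hs)).1.1.1
  simpa using add_mul_sub_le_of_le_hasDerivWithinAt (fun t ht ↦ (hF t ht).fst)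
    (fun t ht ↦ by
      have ht' := Ico_subset_Icc_self ht
      obtain ⟨hmem, hcone⟩ := hbox t ht'
      have := hmono t ht'
      rw [clampedField_of_mem hmem]
      simp only [field]
      nlinarith) s (right_mem_Icc.2 hs)

theorem exists_le_escapeNorm
    (hF : ∀ t ∈ Icc 0 s, HasDerivWithinAt F (clampedField (F t)) (Icc 0 s) t) (hs : 0 ≤ s)
    (hu : 0 < (F 0).1) (hcone : (F 0).1 + 3 * (F 0).2.1 ≤ 0)
    (hgrowth : 1 / 10 ≤ (F 0).1 + (F 0).1 ^ 2 / 3 * s) :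
    ∃ t ∈ Icc 0 s, 1 / 10 ≤ escapeNorm (F t) := by
  by_contra! hesc
  have hbox := mem_box_of_escapeNorm_le hF hu hcone fun t ht ↦ (hesc t ht).le
  have hlt : (F s).1 < 1 / 10 := (le_max_left _ _).trans_lt (hesc s (right_mem_Icc.2 hs))
  linarith [fst_add_le_of_mem_box hF hs hbox]

end Trajectory

end DeSitter

end

open DeSitter in
theorem deSitter_equilibrium_unstable_general
    (γ : ℝ) :
    ∃ ε > (0 : ℝ), ∀ δ > (0 : ℝ),
      ∃ (u y ρ H : ℝ → ℝ) (T : ℝ), 0 < T ∧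
        (∀ t ∈ Set.Icc (0 : ℝ) T,
          HasDerivWithinAt u (-(u t * y t)) (Set.Icc (0 : ℝ) T) t ∧
          HasDerivWithinAt y (-(u t) + u t ^ 2 - 3 * H t * y t) (Set.Icc (0 : ℝ) T) t ∧
          HasDerivWithinAt ρ (-(3 * γ * ρ t * H t)) (Set.Icc (0 : ℝ) T) t ∧
          HasDerivWithinAt H
            (1 / 4 * (1 - u t) ^ 2 - 1 / 2 * y t ^ 2 - (3 * γ - 2) / 6 * ρ t - H t ^ 2)
            (Set.Icc (0 : ℝ) T) t) ∧
        Real.sqrt (u 0 ^ 2 + y 0 ^ 2 + ρ 0 ^ 2 + (H 0 - 1 / 2) ^ 2) < δ ∧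
        Real.sqrt (u T ^ 2 + y T ^ 2 + ρ T ^ 2 + (H T - 1 / 2) ^ 2) > ε := by
  refine ⟨1 / 20, by norm_num, fun δ hδ ↦ ?_⟩
  set u₀ := min (δ / 2) (1 / 100)
  have hu₀ : 0 < u₀ := lt_min (by linarith) (by norm_num)
  have hu₀δ : u₀ ≤ δ / 2 := min_le_left _ _
  have hu₀le : u₀ ≤ 1 / 100 := min_le_right _ _
  obtain ⟨⟨L, hL⟩, K, hK⟩ := clampedField_bounded_lipschitz
  obtain ⟨F, hF0, hF⟩ := exists_hasDerivWithinAt_Icc_of_lipschitzWith hL hK (u₀, -u₀, 1 / 2)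
    (T := 1 / u₀ ^ 2) (by positivity)
  obtain ⟨hu0, hy0⟩ : (F 0).1 = u₀ ∧ (F 0).2.1 = -u₀ := by simp [hF0]
  have hcone : (F 0).1 + 3 * (F 0).2.1 ≤ 0 := by rw [hu0, hy0]; linarith
  have hcont : ContinuousOn (escapeNorm ∘ F) (Icc 0 (1 / u₀ ^ 2)) :=
    continuous_escapeNorm.comp_continuousOn fun t ht ↦ (hF t ht).continuousWithinAt
  have hgrowth : 1 / 10 ≤ (F 0).1 + (F 0).1 ^ 2 / 3 * (1 / u₀ ^ 2) := by
    rw [hu0]; field_simp; nlinarith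
  obtain ⟨τ, hτ, hτesc, hbefore⟩ := exists_first_eq_of_continuousOn hcont
    (by simpa [hF0, escapeNorm] using hu₀le.trans_lt (by norm_num))
    (exists_le_escapeNorm hF (by positivity) (hu0 ▸ hu₀) hcone hgrowth)
  have hFτ : ∀ t ∈ Icc 0 τ, HasDerivWithinAt F (clampedField (F t)) (Icc 0 τ) t :=
    fun t ht ↦ (hF t ⟨ht.1, ht.2.trans hτ.2⟩).mono (Icc_subset_Icc_right hτ.2)
  have hle : ∀ t ∈ Icc 0 τ, escapeNorm (F t) ≤ 1 / 10 := fun t ht ↦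
    (eq_or_lt_of_le ht.2).elim (fun h ↦ h ▸ hτesc.le) fun h ↦ (hbefore t ⟨ht.1, h⟩).le
  have hbox := mem_box_of_escapeNorm_le hFτ (hu0 ▸ hu₀) hcone hle
  refine ⟨fun t ↦ (F t).1, fun t ↦ (F t).2.1, fun _ ↦ 0, fun t ↦ (F t).2.2, τ, hτ.1,
    fun t ht ↦ ?_, ?_, ?_⟩
  · have h := clampedField_of_mem (hbox t ht).1 ▸ hFτ t ht
    exact ⟨h.fst, h.snd.fst, by simpa using hasDerivWithinAt_const t _ (0 : ℝ),
      by simpa [field] using h.snd.snd⟩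
  · simp only [hF0]
    rw [Real.sqrt_lt' hδ]
    nlinarith
  · rw [gt_iff_lt, Real.lt_sqrt (by norm_num)]
    nlinarith [sq_le_of_le_escapeNorm (by norm_num) hτesc.ge]

/-- Theorem 1: the equilibrium `S = (u, y, ρ, H) = (0, 0, 0, 1/2)` of the
Einstein-frame system
`u' = -u y`, `y' = -u + u² - 3 H y`, `ρ' = -3 γ ρ H`,
`H' = (1/4)(1-u)² - (1/2)y² - ((3γ-2)/6)ρ - H²`
is Lyapunov unstable for every `γ ∈ [0, 2]`: there is `ε > 0` so that arbitrarily
close to `S` there start solutions which leave the `ε`-ball around `S`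
(distances measured in the Euclidean norm on `ℝ⁴`). -/
theorem deSitter_equilibrium_unstable
    (γ : ℝ) (hγ : γ ∈ Set.Icc (0 : ℝ) 2) :
    ∃ ε > (0 : ℝ), ∀ δ > (0 : ℝ),
      ∃ (u y ρ H : ℝ → ℝ) (T : ℝ), 0 < T ∧
        (∀ t ∈ Set.Icc (0 : ℝ) T,
          HasDerivWithinAt u (-(u t * y t)) (Set.Icc (0 : ℝ) T) t ∧
          HasDerivWithinAt y (-(u t) + u t ^ 2 - 3 * H t * y t) (Set.Icc (0 : ℝ) T) t ∧
          HasDerivWithinAt ρ (-(3 * γ * ρ t * H t)) (Set.Icc (0 : ℝ) T) t ∧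
          HasDerivWithinAt H
            (1 / 4 * (1 - u t) ^ 2 - 1 / 2 * y t ^ 2 - (3 * γ - 2) / 6 * ρ t - H t ^ 2)
            (Set.Icc (0 : ℝ) T) t) ∧
        Real.sqrt (u 0 ^ 2 + y 0 ^ 2 + ρ 0 ^ 2 + (H 0 - 1 / 2) ^ 2) < δ ∧
        Real.sqrt (u T ^ 2 + y T ^ 2 + ρ T ^ 2 + (H T - 1 / 2) ^ 2) > ε :=
  deSitter_equilibrium_unstable_general γ
end
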